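/- arXiv:2508.15692 — 4 statements merged into one kernel-verified Lean document; each statement's English description precedes it below -/
import Mathlib

section
/- Every unit belongs to one of the four categories (alwaystaker, nevertaker, complier, defier of T with respect to D) for every cutoff rule D if and only if dim(supp(T)) = 1. -/
open Filter
open scoped Topology

namespace MRD

abbrev Score (K : ℕ) := Fin K → ℝ

/-- The k-th standard basis vector of `ℝ^K`. -/
def stdBasis {K : ℕ} (k : Fin K) : Score K := Pi.single k 1

/-- `T` is a cutoff rule: `T x c = g (1[x_1 > c_1], ..., 1[x_K > c_K])` for a Boolean `g`. -/
def IsCutoffRule {K : ℕ} (T : Score K → Score K → Bool) : Prop :=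
  ∃ g : (Fin K → Bool) → Bool, ∀ x c, T x c = g fun k => decide (c k < x k)

/-- Support directions `S(T)`. -/
def suppDirs {K : ℕ} (T : Score K → Score K → Bool) : Set (Fin K) :=
  {k | ∃ c : Score K, ∃ l : ℝ, T 0 (c + l • stdBasis k) ≠ T 0 c}

/-- `supp(T)`: the span of the standard basis vectors in the support directions. -/
def supp {K : ℕ} (T : Score K → Score K → Bool) : Submodule ℝ (Score K) :=
  Submodule.span ℝ (stdBasis '' suppDirs T)

/-- `N^T`: scores that never affect `T`. -/
def nspace {K : ℕ} (T : Score K → Score K → Bool) : Set (Score K) :=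
  {X | ∀ c, T X c = T 0 c}

/-- The component `X^T` of `X` in `supp(T)` (coordinatewise indicator projection). -/
noncomputable def projT {K : ℕ} (T : Score K → Score K → Bool) (X : Score K) : Score K :=
  (suppDirs T).indicator X

/-- The component `X^{⊥T}` of `X` in `N^T`. -/
noncomputable def perpT {K : ℕ} (T : Score K → Score K → Bool) (X : Score K) : Score K :=
  X - projT T X

/-- Nevertaker of `T` w.r.t. decision rule `D`, for a unit with score `X`. -/
def Nevertaker {K : ℕ} (T : Score K → Score K → Bool) (D : Score K → Bool)
    (X : Score K) : Prop :=
  ∀ c ∈ supp T, D (perpT T X - c) = false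

/-- Alwaystaker of `T` w.r.t. `D`. -/
def Alwaystaker {K : ℕ} (T : Score K → Score K → Bool) (D : Score K → Bool)
    (X : Score K) : Prop :=
  ∀ c ∈ supp T, D (perpT T X - c) = true

/-- Complier of `T` w.r.t. `D`. -/
def Complier {K : ℕ} (T : Score K → Score K → Bool) (D : Score K → Bool)
    (X : Score K) : Prop :=
  ∀ c ∈ supp T, T 0 c = D (perpT T X - c)

/-- Defier of `T` w.r.t. `D`. -/
def Defier {K : ℕ} (T : Score K → Score K → Bool) (D : Score K → Bool)
    (X : Score K) : Prop :=
  ∀ c ∈ supp T, T 0 c ≠ D (perpT T X - c)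

/-- Indecisive: none of the four categories. -/
def Indecisive {K : ℕ} (T : Score K → Score K → Bool) (D : Score K → Bool)
    (X : Score K) : Prop :=
  ¬ Nevertaker T D X ∧ ¬ Alwaystaker T D X ∧ ¬ Complier T D X ∧ ¬ Defier T D X

/-- Nevertaker, cutoff-rule form: `D(X | c) = 0` for all `c ∈ supp(T)`. -/
def NevertakerC {K : ℕ} (T D : Score K → Score K → Bool) (X : Score K) : Prop :=
  ∀ c ∈ supp T, D X c = false

/-- Alwaystaker, cutoff-rule form. -/
def AlwaystakerC {K : ℕ} (T D : Score K → Score K → Bool) (X : Score K) : Prop :=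
  ∀ c ∈ supp T, D X c = true

/-- Complier, cutoff-rule form: `T(X | c) = D(X | c)` for all `c ∈ supp(T)`. -/
def ComplierC {K : ℕ} (T D : Score K → Score K → Bool) (X : Score K) : Prop :=
  ∀ c ∈ supp T, T X c = D X c

/-- Defier, cutoff-rule form. -/
def DefierC {K : ℕ} (T D : Score K → Score K → Bool) (X : Score K) : Prop :=
  ∀ c ∈ supp T, T X c ≠ D X c

/-- A decision rule arising from a cutoff rule that uses only the zero cutoff in the
directions of `supp(T)`. -/
def IsAdaptedRule {K : ℕ} (T : Score K → Score K → Bool) (D : Score K → Bool) : Prop :=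
  ∃ g : (Fin K → Bool) → Bool, ∃ b : Score K, (∀ k ∈ suppDirs T, b k = 0) ∧
    ∀ y, D y = g fun k => decide (b k < y k)


section Aux

variable {K : ℕ} (T : Score K → Score K → Bool)

open Classical in
lemma mem_supp_of {c : Score K} (hc : ∀ j ∉ suppDirs T, c j = 0) : c ∈ supp T := by
  have hrep : c = ∑ j : Fin K, c j • stdBasis j := by
    funext j
    simp [stdBasis, Finset.sum_apply, Pi.single_apply]
  rw [hrep]
  refine Submodule.sum_mem _ fun j _ => ?_
  by_cases hj : j ∈ suppDirs T
  · exact Submodule.smul_mem _ _ (Submodule.subset_span ⟨j, hj, rfl⟩)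
  · simp [hc j hj]

lemma supp_apply_eq_zero {c : Score K} (hc : c ∈ supp T) {j : Fin K}
    (hj : j ∉ suppDirs T) : c j = 0 := by
  classical
  have hle : supp T ≤ Submodule.pi ((suppDirs T)ᶜ) (fun _ => (⊥ : Submodule ℝ ℝ)) := by
    rw [supp, Submodule.span_le]
    rintro _ ⟨k, hk, rfl⟩ i hi
    have hik : i ≠ k := fun h => hi (h ▸ hk)
    simp [stdBasis, Pi.single_apply, hik, Submodule.mem_bot]
  exact hle hc j hj

lemma finrank_supp : Module.finrank ℝ (supp T) = (suppDirs T).ncard := by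
  classical
  have : Fintype ↥(suppDirs T) := (Set.toFinite _).fintype
  have h1 : LinearIndependent ℝ (fun k : Fin K => stdBasis (K := K) k) := by
    have h0 := (Pi.basisFun ℝ (Fin K)).linearIndependent
    have he : ⇑(Pi.basisFun ℝ (Fin K)) = fun k : Fin K => stdBasis (K := K) k := by
      funext i; simp [stdBasis]
    rwa [he] at h0
  have h2 : LinearIndependent ℝ (fun k : ↥(suppDirs T) => stdBasis (K := K) k) :=
    h1.comp _ Subtype.val_injective
  have h3 : Set.range (fun k : ↥(suppDirs T) => stdBasis (K := K) k)
      = stdBasis '' suppDirs T := by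
    rw [← Set.image_eq_range]
  rw [supp, ← h3, finrank_span_eq_card h2, Set.ncard_eq_toFinset_card',
    Set.toFinset_card]

lemma supp_eq_bot_iff : supp T = ⊥ ↔ suppDirs T = ∅ := by
  constructor
  · intro h
    by_contra hne
    obtain ⟨k, hk⟩ := Set.nonempty_iff_ne_empty.mpr hne
    have hmem : stdBasis (K := K) k ∈ supp T := Submodule.subset_span ⟨k, hk, rfl⟩
    rw [h, Submodule.mem_bot] at hmem
    have := congrFun hmem k
    simp [stdBasis] at this
  · intro h
    simp [supp, h]

lemma notDir_update {k : Fin K} (hk : k ∉ suppDirs T) (c : Score K) :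
    T 0 (Function.update c k 1) = T 0 c := by
  simp only [suppDirs, Set.mem_setOf_eq, not_exists, not_not] at hk
  have h := hk c (1 - c k)
  convert h using 2
  funext j
  by_cases hj : j = k
  · subst hj; simp [stdBasis]
  · simp [stdBasis, Function.update, hj, Pi.single_apply]

open Classical in
lemma T_mask (c : Score K) :
    T 0 c = T 0 (fun j => if j ∈ suppDirs T then c j else 1) := by
  set c' : Score K := fun j => if j ∈ suppDirs T then c j else 1 with hc'
  have aux : ∀ s : Finset (Fin K),
      T 0 (fun j => if j ∈ s then c j else c' j) = T 0 c' := by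
    intro s
    induction s using Finset.induction_on with
    | empty => simp
    | @insert a s ha ih =>
      by_cases haS : a ∈ suppDirs T
      · have he : (fun j => if j ∈ insert a s then c j else c' j)
            = (fun j => if j ∈ s then c j else c' j) := by
          funext j
          by_cases hj : j = a
          · subst hj; simp [ha, haS, hc']
          · simp [Finset.mem_insert, hj]
        rw [he, ih]
      · have he : (fun j => if j ∈ insert a s then c j else c' j)
            = Function.update (fun j => if j ∈ s then c j else c' j) a (c a) := by
          funext j
          by_cases hj : j = a
          · subst hj; simp [ha]
          · simp [Function.update, hj, Finset.mem_insert]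
        have h2 := notDir_update T haS
          (Function.update (fun j => if j ∈ s then c j else c' j) a (c a))
        rw [Function.update_idem] at h2
        have h3 : Function.update (fun j => if j ∈ s then c j else c' j) a (1:ℝ)
            = (fun j => if j ∈ s then c j else c' j) := by
          funext j
          by_cases hj : j = a
          · subst hj; simp [ha, hc', haS]
          · simp [Function.update, hj]
        rw [he, ← h2, h3, ih]
  have := aux Finset.univ
  simpa using this

lemma bool_four (f h : Bool → Bool) (hf : f true ≠ f false) :
    (∀ s, h s = true) ∨ (∀ s, h s = false) ∨ (∀ s, f s = h s) ∨ (∀ s, f s ≠ h s) := by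
  revert hf
  revert f h
  decide

end Aux

/-- every unit belongs to one of the four categories for every such
cutoff rule `D` iff `dim supp(T) = 1`. -/
theorem stmt4 {K : ℕ} (T : Score K → Score K → Bool)
    (hT : IsCutoffRule T) (hnd : supp T ≠ ⊥) :
    (∀ D : Score K → Bool, IsAdaptedRule T D → ∀ X : Score K,
      Alwaystaker T D X ∨ Nevertaker T D X ∨ Complier T D X ∨ Defier T D X) ↔
    Module.finrank ℝ ↥(supp T) = 1 := by
  constructor
  · -- forward: classification for all D implies dim = 1
    intro hLHS
    rw [finrank_supp]
    have hfin : (suppDirs T).Finite := Set.toFinite _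
    have hpos : 0 < (suppDirs T).ncard := by
      rw [Set.ncard_pos hfin, Set.nonempty_iff_ne_empty]
      intro h
      exact hnd ((supp_eq_bot_iff T).mpr h)
    by_contra hone
    have h2 : 1 < (suppDirs T).ncard := by omega
    obtain ⟨k, l, hk, hl, hkl⟩ := (Set.one_lt_ncard_iff hfin).mp h2
    obtain ⟨g, hg⟩ := hT
    classical
    set gD : (Fin K → Bool) → Bool := fun v =>
      (g v && v k && v l) || (!(g v) && !(v k) && v l) || (v k && !(v l)) with hgD
    set D : Score K → Bool := fun y => gD (fun j => decide ((0:ℝ) < y j)) with hDdef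
    have hD : IsAdaptedRule T D := by
      refine ⟨gD, 0, fun _ _ => rfl, fun y => ?_⟩
      simp only [hDdef, Pi.zero_apply]
    have hperp : perpT T (0 : Score K) = 0 := by
      funext j
      simp [perpT, projT]
    set cw : (Fin K → Bool) → Score K := fun w j =>
      if j ∈ suppDirs T then (if w j then (-1:ℝ) else 1) else 0 with hcw
    have hcmem : ∀ w, cw w ∈ supp T := fun w =>
      mem_supp_of T (fun j hj => by simp [hcw, hj])
    set V : (Fin K → Bool) → (Fin K → Bool) :=
      fun w j => if j ∈ suppDirs T then w j else false with hV
    have hTe : ∀ w, T 0 (cw w) = g (V w) := by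
      intro w
      rw [hg]
      congr 1
      funext j
      by_cases hj : j ∈ suppDirs T
      · by_cases hw : w j <;> simp [hcw, hV, hj, hw]
      · simp [hcw, hV, hj]
    have hDe : ∀ w, D (perpT T 0 - cw w) = gD (V w) := by
      intro w
      rw [hperp]
      simp only [hDdef]
      congr 1
      funext j
      by_cases hj : j ∈ suppDirs T
      · by_cases hw : w j <;> simp [hcw, hV, hj, hw]
      · simp [hcw, hV, hj]
    rcases hLHS D hD 0 with hA | hN | hC | hDef
    · have hthis := hA (cw (fun _ => false)) (hcmem _)
      rw [hDe] at hthis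
      have e1 : V (fun _ => false) k = false := by simp [hV]
      have e2 : V (fun _ => false) l = false := by simp [hV]
      simp only [hgD] at hthis
      rw [e1, e2] at hthis
      simp at hthis
    · have hthis := hN (cw (fun j => decide (j = k))) (hcmem _)
      rw [hDe] at hthis
      have e1 : V (fun j => decide (j = k)) k = true := by simp [hV, hk]
      have e2 : V (fun j => decide (j = k)) l = false := by
        simp [hV, hl, Ne.symm hkl]
      simp only [hgD] at hthis
      rw [e1, e2] at hthis
      simp at hthis
    · have hthis := hC (cw (fun j => decide (j = l))) (hcmem _)
      rw [hDe, hTe] at hthis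
      have e1 : V (fun j => decide (j = l)) k = false := by simp [hV, hk, hkl]
      have e2 : V (fun j => decide (j = l)) l = true := by simp [hV, hl]
      simp only [hgD] at hthis
      rw [e1, e2] at hthis
      revert hthis
      cases g (V (fun j => decide (j = l))) <;> decide
    · have hthis := hDef (cw (fun j => decide (j = k) || decide (j = l))) (hcmem _)
      rw [hDe, hTe] at hthis
      have e1 : V (fun j => decide (j = k) || decide (j = l)) k = true := by
        simp [hV, hk]
      have e2 : V (fun j => decide (j = k) || decide (j = l)) l = true := by
        simp [hV, hl]
      simp only [hgD] at hthis
      rw [e1, e2] at hthis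
      revert hthis
      cases g (V (fun j => decide (j = k) || decide (j = l))) <;> decide
  · -- reverse: dim = 1 implies classification
    intro hone D hD X
    rw [finrank_supp] at hone
    obtain ⟨k0, hS⟩ := Set.ncard_eq_one.mp hone
    obtain ⟨g, hg⟩ := hT
    classical
    set f : Bool → Bool := fun s => g (fun j => if j = k0 then s else false) with hf
    have hk0 : k0 ∈ suppDirs T := by rw [hS]; exact Set.mem_singleton _
    have hTf : ∀ x : Score K, T 0 x = f (decide (x k0 < 0)) := by
      intro x
      rw [T_mask T x, hg]
      simp only [Pi.zero_apply]
      have hvec : (fun j => decide ((if j ∈ suppDirs T then x j else 1) < (0:ℝ)))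
          = (fun j => if j = k0 then decide (x k0 < 0) else false) := by
        funext j
        by_cases hj : j = k0
        · subst hj; simp [hS]
        · have hjS : j ∉ suppDirs T := by rw [hS]; simpa using hj
          simp only [if_neg hjS, if_neg hj]
          norm_num
      rw [hvec]
    have hfnc : f true ≠ f false := by
      obtain ⟨c, lr, hne⟩ := hk0
      rw [hTf, hTf] at hne
      have hck : (c + lr • stdBasis k0) k0 = c k0 + lr := by simp [stdBasis]
      rw [hck] at hne
      rcases Bool.eq_false_or_eq_true (decide (c k0 + lr < 0)) with h1 | h1 <;>
        rcases Bool.eq_false_or_eq_true (decide (c k0 < 0)) with h2 | h2 <;>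
        rw [h1, h2] at hne <;>
        first
          | exact absurd rfl hne
          | exact hne
          | exact Ne.symm hne
    obtain ⟨g', b, hb, hDg⟩ := hD
    set β : Fin K → Bool := fun j => decide (b j < X j) with hβ
    set h : Bool → Bool := fun s => g' (fun j => if j = k0 then s else β j) with hh
    have hDc : ∀ c ∈ supp T, D (perpT T X - c) = h (decide (c k0 < 0)) := by
      intro c hc
      rw [hDg]
      have hvec : (fun j => decide (b j < (perpT T X - c) j))
          = (fun j => if j = k0 then decide (c k0 < 0) else β j) := by
        funext j
        by_cases hj : j = k0
        · subst hj
          have hbj : b j = 0 := hb j hk0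
          have harg : (perpT T X - c) j = -c j := by
            simp [perpT, projT, Set.indicator_of_mem hk0]
          rw [harg, hbj, if_pos rfl, decide_eq_decide]
          exact neg_pos
        · have hjS : j ∉ suppDirs T := by rw [hS]; simpa using hj
          have hcj : c j = 0 := supp_apply_eq_zero T hc hjS
          have harg : (perpT T X - c) j = X j := by
            simp [perpT, projT, Set.indicator_of_notMem hjS, hcj]
          rw [harg, if_neg hj]
      rw [hvec]
    rcases bool_four f h hfnc with hcase | hcase | hcase | hcase
    · left; intro c hc; rw [hDc c hc]; exact hcase _
    · right; left; intro c hc; rw [hDc c hc]; exact hcase _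
    · right; right; left; intro c hc; rw [hTf, hDc c hc]; exact hcase _
    · right; right; right; intro c hc; rw [hTf, hDc c hc]; exact hcase _


end MRD
end

section
/- Let G, H be cutoff rules on R^K with supp(T) = supp(G) ⊕ supp(H). Then N^G = supp(H) ⊕ N^T. -/
/-! For a cutoff rule `T` we have `T x c = T 0 (c - x)`, so `N^T` is the set of periods of
`T 0 : ℝ^K → Bool`. Every translation along a direction outside `S(T)` is a period, hence so is
every vector vanishing on `S(T)`. Conversely a period `X` with `X k ≠ 0` for some `k ∈ S(T)` is
impossible: `T 0` only reads the signs of the coordinates, and a point with `k`-th coordinate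
`min 0 (-X k)` changes that sign under translation by `X`, while its other coordinates can be
chosen to keep their signs and to reproduce those at which `T 0` jumps in direction `k`. So
`N^T` is the coordinate subspace of vectors vanishing on `S(T)`, while `supp(T)` consists of the
vectors vanishing off `S(T)`, and the hypothesis says that `S(T)` is the disjoint union of
`S(G)` and `S(H)`. The claim is then set algebra on coordinate sets. -/

open Filter
open scoped Topology

namespace Submodule

variable {R M ι : Type*} [Semiring R] [AddCommMonoid M] [Module R M]

theorem pi_bot_sup_pi_bot (s t : Set ι) :
    ((pi s fun _ ↦ ⊥ : Submodule R (ι → M)) ⊔ pi t fun _ ↦ ⊥) = pi (s ∩ t) fun _ ↦ ⊥ := by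
  classical
  refine le_antisymm (sup_le (fun x hx i hi ↦ hx i hi.1) (fun x hx i hi ↦ hx i hi.2)) ?_
  intro x hx
  rw [← Set.indicator_compl_add_self s x]
  refine add_mem_sup (fun i hi ↦ by simp [hi]) (fun i hi ↦ ?_)
  by_cases his : i ∈ s
  · simpa [his] using hx i ⟨his, hi⟩
  · simp [his]

theorem disjoint_pi_bot_of_union_eq_univ {s t : Set ι} (hst : s ∪ t = Set.univ) :
    Disjoint (pi s fun _ ↦ ⊥ : Submodule R (ι → M)) (pi t fun _ ↦ ⊥) := by
  rw [disjoint_iff, ← pi_univ_bot, ← hst]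
  ext x
  simp [or_imp, forall_and]

theorem span_image_single_one [Fintype ι] [DecidableEq ι] (s : Set ι) :
    span R ((fun i ↦ (Pi.single i 1 : ι → R)) '' s) = pi sᶜ fun _ ↦ ⊥ := by
  refine le_antisymm (span_le.mpr ?_) fun x hx ↦ ?_
  · rintro _ ⟨i, hi, rfl⟩ j hj
    simp [show j ≠ i from fun h ↦ hj (h ▸ hi)]
  · rw [← Finset.univ_sum_single x]
    refine sum_mem fun i _ ↦ ?_
    by_cases hi : i ∈ s
    · have hmem : (Pi.single i 1 : ι → R) ∈ span R ((fun i ↦ (Pi.single i 1 : ι → R)) '' s) :=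
        subset_span (Set.mem_image_of_mem _ hi)
      simpa [← Pi.single_smul'] using smul_mem _ (x i) hmem
    · simp [show x i = 0 from hx i hi]

end Submodule

namespace Function

theorem periodic_of_periodic_single {ι M β : Type*} [Fintype ι] [DecidableEq ι]
    [AddCommMonoid M] {f : (ι → M) → β} {s : Set ι}
    (hf : ∀ i ∉ s, ∀ m, Periodic f (Pi.single i m)) {x : ι → M} (hx : ∀ i ∈ s, x i = 0) :
    Periodic f x := by
  rw [← Finset.univ_sum_single x]
  refine Finset.sum_induction _ (Periodic f) (fun _ _ ↦ Periodic.add_period) (fun _ ↦ by simp)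
    fun i _ ↦ ?_
  by_cases hi : i ∈ s
  · simp [hx i hi, Periodic]
  · exact hf i hi (x i)

theorem apply_update_ne_of_apply_update_ne {ι β : Type*} [DecidableEq ι] {g : (ι → Bool) → β}
    {u : ι → Bool} {i : ι} {a b a' b' : Bool} (hab : g (update u i a) ≠ g (update u i b))
    (ha'b' : a' ≠ b') : g (update u i a') ≠ g (update u i b') := by
  cases a <;> cases b <;> cases a' <;> cases b' <;> simp_all [ne_comm]

end Function

namespace MRD

open Function

variable {K : ℕ} {T G H : Score K → Score K → Bool}

theorem span_stdBasis_image (S : Set (Fin K)) :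
    Submodule.span ℝ (stdBasis '' S) = Submodule.pi Sᶜ fun _ ↦ ⊥ :=
  Submodule.span_image_single_one S

theorem stdBasis_mem_span_image_iff {S : Set (Fin K)} {k : Fin K} :
    stdBasis k ∈ Submodule.span ℝ (stdBasis '' S) ↔ k ∈ S := by
  rw [span_stdBasis_image]
  refine ⟨fun h ↦ by_contra fun hk ↦ ?_, fun hk j hj ↦ ?_⟩
  · simpa [stdBasis] using h k hk
  · simp [stdBasis, show j ≠ k from fun h ↦ hj (h ▸ hk)]

theorem suppDirs_eq_union_of_supp_eq_sup (hsum : supp T = supp G ⊔ supp H) :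
    suppDirs T = suppDirs G ∪ suppDirs H := by
  ext k
  rw [← stdBasis_mem_span_image_iff, ← stdBasis_mem_span_image_iff, Set.image_union,
    Submodule.span_union]
  exact Iff.of_eq (congrArg (stdBasis k ∈ ·) hsum)

theorem disjoint_suppDirs_of_disjoint_supp (hdisj : Disjoint (supp G) (supp H)) :
    Disjoint (suppDirs G) (suppDirs H) := by
  refine Set.disjoint_left.mpr fun k hG hH ↦ ?_
  have hk : stdBasis k ∈ supp G ⊓ supp H :=
    ⟨Submodule.subset_span ⟨k, hG, rfl⟩, Submodule.subset_span ⟨k, hH, rfl⟩⟩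
  simp [hdisj.eq_bot, stdBasis] at hk

theorem periodic_single_of_notMem_suppDirs {k : Fin K} (hk : k ∉ suppDirs T) (l : ℝ) :
    Periodic (T 0) (Pi.single k l) := by
  simp only [suppDirs, Set.mem_ofPred_eq, not_exists, not_not] at hk
  intro c
  simpa [stdBasis, ← Pi.single_smul'] using hk c l

theorem IsCutoffRule.apply_eq (hT : IsCutoffRule T) (x c : Score K) : T x c = T 0 (c - x) := by
  obtain ⟨g, hg⟩ := hT
  simp only [hg, Pi.sub_apply, Pi.zero_apply, sub_neg]

theorem IsCutoffRule.mem_nspace_iff (hT : IsCutoffRule T) {X : Score K} :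
    X ∈ nspace T ↔ Periodic (T 0) X := by
  simp only [nspace, Set.mem_ofPred_eq, hT.apply_eq X, sub_eq_add_neg]
  exact ⟨fun h ↦ by simpa using Periodic.neg h, Periodic.neg⟩

theorem IsCutoffRule.apply_eq_zero_of_periodic (hT : IsCutoffRule T) {X : Score K}
    (hX : Periodic (T 0) X) {k : Fin K} (hk : k ∈ suppDirs T) : X k = 0 := by
  obtain ⟨g, hg⟩ := hT
  obtain ⟨c, l, hcl⟩ := hk
  by_contra hXk
  let u : Fin K → Bool := fun j ↦ decide (c j < 0)
  have hT0 : ∀ y : Score K, (∀ j ≠ k, decide (y j < 0) = u j) →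
      T 0 y = g (update u k (decide (y k < 0))) := by
    intro y hy
    rw [hg]
    congr 1
    funext j
    by_cases hj : j = k
    · subst hj; simp
    · simp [hj, hy j hj]
  -- off `k`, `c'` has the same signs as `c`, also after translation by `X`
  let c' : Score K := fun j ↦
    if j = k then min 0 (-X k) else if c j < 0 then -(|X j| + 1) else |X j|
  have hflip : decide (c' k < 0) ≠ decide ((c' + X) k < 0) := by
    rcases lt_or_gt_of_ne hXk with h | h <;> simp [c', h, h.le]
  rw [hT0 _ fun j hj ↦ by simp [stdBasis, hj, u], hT0 c fun _ _ ↦ rfl] at hcl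
  have hne := apply_update_ne_of_apply_update_ne hcl hflip
  rw [← hT0 c' fun j hj ↦ ?_, ← hT0 (c' + X) fun j hj ↦ ?_] at hne
  · exact hne (hX c').symm
  all_goals
    have := le_abs_self (X j)
    have := neg_abs_le (X j)
    by_cases hc : c j < 0 <;> simp [c', u, hj, hc] <;> linarith

theorem IsCutoffRule.nspace_eq (hT : IsCutoffRule T) :
    nspace T = (Submodule.pi (suppDirs T) fun _ ↦ ⊥ : Submodule ℝ (Score K)) := by
  ext X
  simp only [hT.mem_nspace_iff, SetLike.mem_coe, Submodule.mem_pi, Submodule.mem_bot]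
  exact ⟨fun hX k hk ↦ hT.apply_eq_zero_of_periodic hX hk,
    periodic_of_periodic_single fun k hk ↦ periodic_single_of_notMem_suppDirs hk⟩

theorem stmt8_general {K : ℕ} (T G H : Score K → Score K → Bool)
    (hT : IsCutoffRule T) (hG : IsCutoffRule G)
    (hdisj : Disjoint (supp G) (supp H))
    (hsum : supp T = supp G ⊔ supp H) :
    ∃ NG NT : Submodule ℝ (Score K),
      (↑NG : Set (Score K)) = nspace G ∧ (↑NT : Set (Score K)) = nspace T ∧
      Disjoint (supp H) NT ∧ NG = supp H ⊔ NT := by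
  have hST := suppDirs_eq_union_of_supp_eq_sup hsum
  have hGH := disjoint_suppDirs_of_disjoint_supp hdisj
  refine ⟨_, _, hG.nspace_eq.symm, hT.nspace_eq.symm, ?_, ?_⟩
  · rw [supp, span_stdBasis_image, hST]
    exact Submodule.disjoint_pi_bot_of_union_eq_univ <|
      Set.eq_univ_of_forall fun k ↦ by by_cases hk : k ∈ suppDirs H <;> simp [hk]
  · rw [supp, span_stdBasis_image, Submodule.pi_bot_sup_pi_bot, hST,
      Set.inter_union_distrib_left, Set.compl_inter_self, Set.union_empty,
      Set.inter_eq_right.mpr hGH.subset_compl_right]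

/-- if `supp(T) = supp(G) ⊕ supp(H)` then `N^G = supp(H) ⊕ N^T`. -/
theorem stmt8 {K : ℕ} (T G H : Score K → Score K → Bool)
    (hT : IsCutoffRule T) (hG : IsCutoffRule G) (hH : IsCutoffRule H)
    (hdisj : Disjoint (supp G) (supp H))
    (hsum : supp T = supp G ⊔ supp H) :
    ∃ NG NT : Submodule ℝ (Score K),
      (↑NG : Set (Score K)) = nspace G ∧ (↑NT : Set (Score K)) = nspace T ∧
      Disjoint (supp H) NT ∧ NG = supp H ⊔ NT :=
  stmt8_general T G H hT hG hdisj hsum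

end MRD
end

section
/- Let T = G ∧ H with supp(T) = supp(G) ⊕ supp(H), supp(G) ≠ {0} ≠ supp(H), and let D be any decision rule. Then: (a) CO(G,T) ∩ CO(T,D) ⊆ CO(G,D); (b) NT(G,T) ∩ CO(T,D) ⊆ NT(G,D); (c) CO(T,D) ⊆ CO(G,D) ∪ NT(G,D). -/
open Filter
open scoped Topology

namespace MRD

/-! ### Auxiliary lemmas -/

lemma stdBasis_apply {K : ℕ} (k j : Fin K) : stdBasis k j = if j = k then 1 else 0 := by
  simp [stdBasis, Pi.single_apply]

/-- The submodule of functions vanishing off `S`. -/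
def vanishing {K : ℕ} (S : Set (Fin K)) : Submodule ℝ (Score K) where
  carrier := {x | ∀ k ∉ S, x k = 0}
  add_mem' := by intro a b ha hb k hk; simp [ha k hk, hb k hk]
  zero_mem' := by intro k hk; rfl
  smul_mem' := by intro c a ha k hk; simp [ha k hk]

lemma mem_span_stdBasis {K : ℕ} {S : Set (Fin K)} {x : Score K} :
    x ∈ Submodule.span ℝ (stdBasis '' S) ↔ ∀ k ∉ S, x k = 0 := by
  constructor
  · intro hx
    have hle : Submodule.span ℝ (stdBasis '' S) ≤ vanishing S := by
      rw [Submodule.span_le]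
      rintro _ ⟨j, hj, rfl⟩ k hk
      rw [stdBasis_apply]
      simp only [ite_eq_right_iff]
      intro h; exact absurd (h ▸ hj) hk
    exact hle hx
  · intro hx
    have hxs : x = ∑ k : Fin K, Pi.single k (x k) := (Finset.univ_sum_single x).symm
    rw [hxs]
    refine Submodule.sum_mem _ fun k _ => ?_
    by_cases hk : k ∈ S
    · have hsm : Pi.single k (x k) = x k • stdBasis k := by
        funext j
        simp only [stdBasis, Pi.single_apply, Pi.smul_apply, smul_eq_mul]
        split <;> simp
      rw [hsm]
      exact Submodule.smul_mem _ _ (Submodule.subset_span ⟨k, hk, rfl⟩)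
    · rw [hx k hk]; simp

lemma stdBasis_mem_span {K : ℕ} {S : Set (Fin K)} {k : Fin K} :
    stdBasis k ∈ Submodule.span ℝ (stdBasis '' S) ↔ k ∈ S := by
  constructor
  · intro h
    by_contra hk
    have h0 := mem_span_stdBasis.mp h k hk
    rw [stdBasis_apply] at h0
    simp at h0
  · intro hk
    exact Submodule.subset_span ⟨k, hk, rfl⟩

/-- Realization of a boolean vector by a cutoff vector. -/
noncomputable def reals {K : ℕ} (b : Fin K → Bool) : Score K := fun j => if b j then -1 else 1

lemma real_eval {K : ℕ} {T : Score K → Score K → Bool} {g : (Fin K → Bool) → Bool}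
    (ht : ∀ x c, T x c = g fun k => decide (c k < x k)) (b : Fin K → Bool) :
    T 0 (reals b) = g b := by
  rw [ht]
  congr 1
  funext j
  simp only [reals, Pi.zero_apply]
  by_cases hb : b j = true
  · simp only [hb, if_true, decide_eq_true_eq]
    norm_num
  · rw [Bool.not_eq_true] at hb
    simp only [hb, Bool.false_eq_true, if_false, decide_eq_false_iff_not]
    norm_num

lemma g_update {K : ℕ} {T : Score K → Score K → Bool} {g : (Fin K → Bool) → Bool}
    (ht : ∀ x c, T x c = g fun k => decide (c k < x k)) {k : Fin K} (hk : k ∉ suppDirs T)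
    (b : Fin K → Bool) (v : Bool) : g (Function.update b k v) = g b := by
  have hinv : ∀ (c : Score K) (l : ℝ), T 0 (c + l • stdBasis k) = T 0 c := by
    intro c l
    by_contra h
    exact hk ⟨c, l, h⟩
  set l : ℝ := (if v then (-1 : ℝ) else 1) - (if b k then (-1 : ℝ) else 1) with hl
  have hupd : reals (Function.update b k v) = reals b + l • stdBasis k := by
    funext j
    simp only [reals, Pi.add_apply, Pi.smul_apply, stdBasis_apply, smul_eq_mul]
    by_cases hj : j = k
    · subst hj; simp [Function.update_self, hl]
    · simp [Function.update_of_ne hj, hj]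
  rw [← real_eval ht, ← real_eval ht, hupd, hinv]

lemma g_congr {K : ℕ} {T : Score K → Score K → Bool} {g : (Fin K → Bool) → Bool}
    (ht : ∀ x c, T x c = g fun k => decide (c k < x k)) {b b' : Fin K → Bool}
    (hbb : ∀ k ∈ suppDirs T, b k = b' k) : g b = g b' := by
  have main : ∀ s : Finset (Fin K), ∀ b b' : Fin K → Bool,
      (∀ k, b k ≠ b' k → k ∈ s) → (∀ k ∈ suppDirs T, b k = b' k) → g b = g b' := by
    intro s
    induction s using Finset.induction with
    | empty =>
      intro b b' hd _
      have hbe : b = b' := by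
        funext k; by_contra h; exact absurd (hd k h) (Finset.notMem_empty k)
      rw [hbe]
    | @insert a s ha ih =>
      intro b b' hd hagree
      set b'' := Function.update b a (b' a) with hb''
      have h1 : g b = g b'' := by
        by_cases hba : b a = b' a
        · have hbb2 : b'' = b := by
            funext j
            by_cases hj : j = a
            · subst hj; simp [hb'', hba]
            · simp [hb'', Function.update_of_ne hj]
          rw [hbb2]
        · by_cases hmem : a ∈ suppDirs T
          · exact absurd (hagree a hmem) hba
          · exact (g_update ht hmem b (b' a)).symm
      rw [h1]
      refine ih b'' b' (fun k hk => ?_) (fun k hk => ?_)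
      · have hka : k ≠ a := by
          intro h; subst h; exact hk (by simp [hb''])
        have hki := hd k (by simpa [hb'', Function.update_of_ne hka] using hk)
        simpa [hka] using Finset.mem_insert.mp hki
      · by_cases hka : k = a
        · subst hka; simp [hb'']
        · simp [hb'', Function.update_of_ne hka, hagree k hk]
  exact main Finset.univ b b' (fun k _ => Finset.mem_univ k) hbb

lemma cutoff_congr {K : ℕ} {T : Score K → Score K → Bool} (hT : IsCutoffRule T)
    {x c x' c' : Score K}
    (h : ∀ k ∈ suppDirs T, decide (c k < x k) = decide (c' k < x' k)) :
    T x c = T x' c' := by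
  obtain ⟨g, ht⟩ := hT
  rw [ht, ht]
  exact g_congr ht h

/-- for `T = G ∧ H` with `supp(T) = supp(G) ⊕ supp(H)` and any decision
rule `D`: (a) `CO(G,T) ∩ CO(T,D) ⊆ CO(G,D)`; (b) `NT(G,T) ∩ CO(T,D) ⊆ NT(G,D)`;
(c) `CO(T,D) ⊆ CO(G,D) ∪ NT(G,D)`. -/
theorem stmt11 {K : ℕ} (T G H : Score K → Score K → Bool) (D : Score K → Bool)
    (hG : IsCutoffRule G) (hH : IsCutoffRule H)
    (hTdef : ∀ x c, T x c = (G x c && H x c))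
    (hdisj : Disjoint (supp G) (supp H))
    (hsum : supp T = supp G ⊔ supp H)
    (hGnd : supp G ≠ ⊥) (hHnd : supp H ≠ ⊥) (X : Score K) :
    (Complier G (fun y => T y 0) X → Complier T D X → Complier G D X) ∧
    (Nevertaker G (fun y => T y 0) X → Complier T D X → Nevertaker G D X) ∧
    (Complier T D X → Complier G D X ∨ Nevertaker G D X) := by
  classical
  obtain ⟨gg, hgg⟩ := hG
  obtain ⟨gh, hgh⟩ := hH
  have hGcut : IsCutoffRule G := ⟨gg, hgg⟩
  have hHcut : IsCutoffRule H := ⟨gh, hgh⟩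
  have hTcut : IsCutoffRule T :=
    ⟨fun b => gg b && gh b, fun x c => by rw [hTdef, hgg, hgh]⟩
  -- support direction facts
  have hdirs : suppDirs T = suppDirs G ∪ suppDirs H := by
    ext k
    rw [← stdBasis_mem_span (S := suppDirs T),
      ← stdBasis_mem_span (S := suppDirs G ∪ suppDirs H)]
    have hsup2 : supp G ⊔ supp H = Submodule.span ℝ (stdBasis '' (suppDirs G ∪ suppDirs H)) := by
      rw [Set.image_union, Submodule.span_union]; rfl
    show stdBasis k ∈ supp T ↔ _
    rw [hsum, hsup2]
  have hdd : ∀ k, k ∈ suppDirs G → k ∉ suppDirs H := by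
    intro k h1 h2
    have m1 : stdBasis k ∈ supp G := stdBasis_mem_span.mpr h1
    have m2 : stdBasis k ∈ supp H := stdBasis_mem_span.mpr h2
    have h0 : stdBasis k = 0 := Submodule.disjoint_def.mp hdisj _ m1 m2
    have h0k := congrFun h0 k
    rw [stdBasis_apply] at h0k
    simp at h0k
  have hind : (suppDirs T).indicator X = (suppDirs G).indicator X + (suppDirs H).indicator X := by
    rw [hdirs]
    exact Set.indicator_union_of_disjoint (Set.disjoint_left.mpr hdd) X
  have hvec : ∀ c : Score K, perpT T X - (c - projT H X) = perpT G X - c := by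
    intro c
    unfold perpT projT
    rw [hind]
    abel
  have hperpT0 : ∀ k ∈ suppDirs T, perpT T X k = 0 := by
    intro k hk
    simp [perpT, projT, Set.indicator_of_mem hk]
  have hperpG0 : ∀ k ∈ suppDirs G, perpT G X k = 0 := by
    intro k hk
    simp [perpT, projT, Set.indicator_of_mem hk]
  have hcH : projT H X ∈ supp H :=
    mem_span_stdBasis.mpr fun k hk => Set.indicator_of_notMem hk X
  have hcmem : ∀ c ∈ supp G, c - projT H X ∈ supp T := by
    intro c hc
    rw [hsum]
    exact Submodule.sub_mem _ (Submodule.mem_sup_left hc) (Submodule.mem_sup_right hcH)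
  -- key: T 0 (c - X^H) = T (X^{⊥G} - c) 0
  have key1 : ∀ c : Score K, T 0 (c - projT H X) = T (perpT G X - c) 0 := by
    intro c
    apply cutoff_congr hTcut
    intro k hk
    have hv := congrFun (hvec c).symm k
    simp only [Pi.sub_apply] at hv
    simp only [Pi.sub_apply, Pi.zero_apply, hv, hperpT0 k hk, zero_sub]
    rw [decide_eq_decide]
    exact neg_pos.symm
  -- key: under CO(T,D), D(X^{⊥G} - c) = T 0 (c - X^H) for c ∈ supp(G)
  have key2 : Complier T D X → ∀ c ∈ supp G, T 0 (c - projT H X) = D (perpT G X - c) := by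
    intro h2 c hc
    have e3 := h2 (c - projT H X) (hcmem c hc)
    rwa [hvec c] at e3
  -- part (a)
  have parta : Complier G (fun y => T y 0) X → Complier T D X → Complier G D X := by
    intro h1 h2 c hc
    have e1 : G 0 c = T (perpT G X - c) 0 := h1 c hc
    rw [e1, ← key1 c, key2 h2 c hc]
  -- part (b)
  have partb : Nevertaker G (fun y => T y 0) X → Complier T D X → Nevertaker G D X := by
    intro h1 h2 c hc
    have e1 : T (perpT G X - c) 0 = false := h1 c hc
    show D (perpT G X - c) = false
    rw [← key2 h2 c hc, key1 c, e1]
  refine ⟨parta, partb, ?_⟩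
  -- part (c)
  intro h2
  have keyc : ∀ c ∈ supp G, T (perpT G X - c) 0 = (G 0 c && H (perpT G X) 0) := by
    intro c hc
    rw [hTdef]
    congr 1
    · apply cutoff_congr hGcut
      intro k hk
      simp only [Pi.sub_apply, Pi.zero_apply, hperpG0 k hk, zero_sub]
      rw [decide_eq_decide]
      exact neg_pos
    · apply cutoff_congr hHcut
      intro k hk
      have hck : c k = 0 := mem_span_stdBasis.mp hc k fun h => hdd k h hk
      simp [Pi.sub_apply, hck]
  by_cases hstar : H (perpT G X) 0 = true
  · left
    refine parta (fun c hc => ?_) h2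
    show G 0 c = T (perpT G X - c) 0
    rw [keyc c hc, hstar, Bool.and_true]
  · right
    rw [Bool.not_eq_true] at hstar
    refine partb (fun c hc => ?_) h2
    show T (perpT G X - c) 0 = false
    rw [keyc c hc, hstar, Bool.and_false]


end MRD
end

section
/- Let T = G ∨ H with supp(T) = supp(G) ⊕ supp(H), supp(G) ≠ {0} ≠ supp(H), and let D be any decision rule. Then: (a) CO(G,T) ∩ DE(T,D) ⊆ DE(G,D); (b) AT(G,T) ∩ DE(T,D) ⊆ NT(G,D); (c) DE(T,D) ⊆ DE(G,D) ∪ NT(G,D). -/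
open Filter
open scoped Topology

namespace MRD

section Aux
variable {K : ℕ}

lemma cutoff_flip {R : Score K → Score K → Bool} (hR : IsCutoffRule R) (y : Score K) :
    R y 0 = R 0 (-y) := by
  obtain ⟨g, hg⟩ := hR
  rw [hg, hg]
  congr 1
  funext k
  simp

lemma mem_supp_iff (R : Score K → Score K → Bool) (x : Score K) :
    x ∈ supp R ↔ ∀ k, k ∉ suppDirs R → x k = 0 := by
  constructor
  · intro hx
    induction hx using Submodule.span_induction with
    | mem y hy =>
      obtain ⟨j, hj, rfl⟩ := hy
      intro k hk
      have : k ≠ j := fun h => hk (h ▸ hj)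
      simp [stdBasis, Pi.single_apply, this]
    | zero => intro k _; simp
    | add y z _ _ hy hz => intro k hk; simp [Pi.add_apply, hy k hk, hz k hk]
    | smul r y _ hy => intro k hk; simp [Pi.smul_apply, hy k hk]
  · intro h
    have hx : x = ∑ k : Fin K, Pi.single k (x k) := (Finset.univ_sum_single x).symm
    rw [hx]
    refine Submodule.sum_mem _ fun k _ => ?_
    by_cases hk : k ∈ suppDirs R
    · have : Pi.single k (x k) = x k • stdBasis k := by
        funext j; by_cases h : j = k <;> simp [stdBasis, Pi.single_apply, h]
      rw [this]
      exact Submodule.smul_mem _ _ (Submodule.subset_span ⟨k, hk, rfl⟩)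
    · rw [h k hk]; simp

lemma stdBasis_mem_supp_iff (R : Score K → Score K → Bool) (k : Fin K) :
    stdBasis k ∈ supp R ↔ k ∈ suppDirs R := by
  constructor
  · intro h
    by_contra hk
    have := (mem_supp_iff R _).mp h k hk
    simp [stdBasis] at this
  · intro hk; exact Submodule.subset_span ⟨k, hk, rfl⟩

lemma cutoff_insensitive (R : Score K → Score K → Bool) (c c' : Score K)
    (h : ∀ k ∈ suppDirs R, c k = c' k) : R 0 c = R 0 c' := by
  classical
  suffices H : ∀ s : Finset (Fin K), ∀ c c' : Score K, (∀ k, c k ≠ c' k → k ∈ s) →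
      (∀ k ∈ suppDirs R, c k = c' k) → R 0 c = R 0 c' from
    H Finset.univ c c' (fun k _ => Finset.mem_univ k) h
  intro s
  induction s using Finset.induction_on with
  | empty =>
    intro c c' hd _
    have : c = c' := funext fun k => not_not.mp fun hk => absurd (hd k hk) (Finset.notMem_empty k)
    rw [this]
  | @insert a s ha ih =>
    intro c c' hd hsup
    by_cases hca : c a = c' a
    · refine ih c c' (fun k hk => ?_) hsup
      rcases Finset.mem_insert.mp (hd k hk) with h | h
      · exact absurd (h ▸ hca) hk
      · exact h
    · have hma : a ∉ suppDirs R := fun hmem => hca (hsup a hmem)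
      have hstep : R 0 (c + (c' a - c a) • stdBasis a) = R 0 c := by
        by_contra hne; exact hma ⟨c, c' a - c a, hne⟩
      set c₂ := c + (c' a - c a) • stdBasis a with hc₂def
      have hc₂ : ∀ k, c₂ k = if k = a then c' a else c k := by
        intro k
        by_cases hk : k = a <;> simp [hc₂def, stdBasis, Pi.single_apply, hk]
      refine hstep.symm.trans (ih c₂ c' (fun k hk => ?_) (fun k hm => ?_))
      · have hka : k ≠ a := fun h => by rw [hc₂ k, if_pos h] at hk; exact hk (h ▸ rfl)
        rw [hc₂ k, if_neg hka] at hk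
        exact (Finset.mem_insert.mp (hd k hk)).resolve_left hka
      · have hka : k ≠ a := fun h => hma (h ▸ hm)
        rw [hc₂ k, if_neg hka]
        exact hsup k hm

end Aux

/-- for `T = G ∨ H` with `supp(T) = supp(G) ⊕ supp(H)` and any decision
rule `D`: (a) `CO(G,T) ∩ DE(T,D) ⊆ DE(G,D)`; (b) `AT(G,T) ∩ DE(T,D) ⊆ NT(G,D)`;
(c) `DE(T,D) ⊆ DE(G,D) ∪ NT(G,D)`. -/
theorem stmt14 {K : ℕ} (T G H : Score K → Score K → Bool) (D : Score K → Bool)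
    (hG : IsCutoffRule G) (hH : IsCutoffRule H)
    (hTdef : ∀ x c, T x c = (G x c || H x c))
    (hdisj : Disjoint (supp G) (supp H))
    (hsum : supp T = supp G ⊔ supp H)
    (hGnd : supp G ≠ ⊥) (hHnd : supp H ≠ ⊥) (X : Score K) :
    (Complier G (fun y => T y 0) X → Defier T D X → Defier G D X) ∧
    (Alwaystaker G (fun y => T y 0) X → Defier T D X → Nevertaker G D X) ∧
    (Defier T D X → Defier G D X ∨ Nevertaker G D X) := by

  classical
  -- Basic set-level facts about support directions
  have hGT : ∀ k, k ∈ suppDirs G → k ∈ suppDirs T := by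
    intro k hk
    rw [← stdBasis_mem_supp_iff, hsum]
    exact Submodule.mem_sup_left ((stdBasis_mem_supp_iff G k).mpr hk)
  have hHT : ∀ k, k ∈ suppDirs H → k ∈ suppDirs T := by
    intro k hk
    rw [← stdBasis_mem_supp_iff, hsum]
    exact Submodule.mem_sup_right ((stdBasis_mem_supp_iff H k).mpr hk)
  have hGHdisj : ∀ k, k ∈ suppDirs G → k ∉ suppDirs H := by
    intro k hkG hkH
    have h0 : stdBasis k = 0 :=
      Submodule.disjoint_def.mp hdisj _ ((stdBasis_mem_supp_iff G k).mpr hkG)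
        ((stdBasis_mem_supp_iff H k).mpr hkH)
    have := congrFun h0 k
    simp [stdBasis] at this
  have hTGH : ∀ k, k ∈ suppDirs T → k ∈ suppDirs G ∨ k ∈ suppDirs H := by
    intro k hk
    by_contra hcon
    push_neg at hcon
    have hmem : stdBasis k ∈ supp G ⊔ supp H := by
      rw [← hsum]; exact (stdBasis_mem_supp_iff T k).mpr hk
    obtain ⟨y, hy, z, hz, hyz⟩ := Submodule.mem_sup.mp hmem
    have h1 : y k = 0 := (mem_supp_iff G y).mp hy k hcon.1
    have h2 : z k = 0 := (mem_supp_iff H z).mp hz k hcon.2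
    have := congrFun hyz k
    simp [stdBasis, Pi.add_apply, h1, h2] at this
  set XH : Score K := (suppDirs H).indicator X with hXHdef
  have hXHmem : XH ∈ supp H := by
    rw [mem_supp_iff]
    intro k hk
    exact Set.indicator_of_notMem hk X
  -- indicator decomposition
  have hind : ∀ k, (suppDirs T).indicator X k
      = (suppDirs G).indicator X k + (suppDirs H).indicator X k := by
    intro k
    by_cases hg : k ∈ suppDirs G
    · rw [Set.indicator_of_mem (hGT k hg) X, Set.indicator_of_mem hg X,
        Set.indicator_of_notMem (hGHdisj k hg) X, add_zero]
    · by_cases hh : k ∈ suppDirs H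
      · rw [Set.indicator_of_mem (hHT k hh) X, Set.indicator_of_mem hh X,
          Set.indicator_of_notMem hg X, zero_add]
      · have ht : k ∉ suppDirs T := fun h => (hTGH k h).elim hg hh
        rw [Set.indicator_of_notMem ht X, Set.indicator_of_notMem hg X,
          Set.indicator_of_notMem hh X, add_zero]
  set b : Bool := H 0 (-XH) with hbdef
  -- key computations for c ∈ supp G
  have hmemT : ∀ c ∈ supp G, c - XH ∈ supp T := by
    intro c hc
    rw [hsum]
    exact Submodule.sub_mem _ (Submodule.mem_sup_left hc) (Submodule.mem_sup_right hXHmem)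
  have hperp : ∀ c : Score K, perpT T X - (c - XH) = perpT G X - c := by
    intro c
    funext k
    simp only [perpT, projT, Pi.sub_apply, hXHdef]
    rw [hind k]
    ring
  have hT0c' : ∀ c ∈ supp G, T 0 (c - XH) = (G 0 c || b) := by
    intro c hc
    rw [hTdef]
    have h1 : G 0 (c - XH) = G 0 c := by
      refine cutoff_insensitive G _ _ fun k hk => ?_
      simp [Pi.sub_apply, hXHdef, Set.indicator_of_notMem (hGHdisj k hk) X]
    have h2 : H 0 (c - XH) = H 0 (-XH) := by
      refine cutoff_insensitive H _ _ fun k hk => ?_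
      have hkG : k ∉ suppDirs G := fun h => hGHdisj k h hk
      have hck : c k = 0 := (mem_supp_iff G c).mp hc k hkG
      simp [Pi.sub_apply, Pi.neg_apply, hck]
    rw [h1, h2, hbdef]
  have hTflip : ∀ c ∈ supp G, T (perpT G X - c) 0 = (G 0 c || b) := by
    intro c hc
    rw [hTdef]
    have hneg : -(perpT G X - c) = c - perpT G X := by ring
    rw [cutoff_flip hG, cutoff_flip hH, hneg]
    have h1 : G 0 (c - perpT G X) = G 0 c := by
      refine cutoff_insensitive G _ _ fun k hk => ?_
      simp [perpT, projT, Pi.sub_apply, Set.indicator_of_mem hk X]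
    have h2 : H 0 (c - perpT G X) = H 0 (-XH) := by
      refine cutoff_insensitive H _ _ fun k hk => ?_
      have hkG : k ∉ suppDirs G := fun h => hGHdisj k h hk
      have hck : c k = 0 := (mem_supp_iff G c).mp hc k hkG
      simp [perpT, projT, Pi.sub_apply, Pi.neg_apply, hck, hXHdef,
        Set.indicator_of_notMem hkG X, Set.indicator_of_mem hk X]
    rw [h1, h2, hbdef]
  have hDef' : Defier T D X → ∀ c ∈ supp G, (G 0 c || b) ≠ D (perpT G X - c) := by
    intro hDE c hc
    have := hDE (c - XH) (hmemT c hc)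
    rw [hT0c' c hc, hperp c] at this
    exact this
  refine ⟨?_, ?_, ?_⟩
  · -- (a)
    intro hCO hDE c hc
    have h1 : G 0 c = (G 0 c || b) := (hCO c hc).trans (hTflip c hc)
    have h2 := hDef' hDE c hc
    rw [← h1] at h2
    exact h2
  · -- (b)
    intro hAT hDE c hc
    have h1 : (G 0 c || b) = true := (hTflip c hc) ▸ hAT c hc
    have h2 := hDef' hDE c hc
    rw [h1] at h2
    cases hDx : D (perpT G X - c)
    · rfl
    · exact absurd hDx.symm h2
  · -- (c)
    intro hDE
    cases hb : b
    · left
      intro c hc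
      have h2 := hDef' hDE c hc
      rw [hb, Bool.or_false] at h2
      exact h2
    · right
      intro c hc
      have h2 := hDef' hDE c hc
      rw [hb, Bool.or_true] at h2
      cases hDx : D (perpT G X - c)
      · rfl
      · exact absurd hDx.symm h2


end MRD
end
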